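/- arXiv:0908.0143 — 3 statements merged into one kernel-verified Lean document; each statement's English description precedes it below -/
import Mathlib

section
/- Weak duality holds between the penalized maximum likelihood problem and its dual: for any symmetric positive definite X and any symmetric positive definite U with |U_{ij} − Σ_{ij}| ≤ ρ for all i,j, one has log det X − Tr(ΣX) − ρ‖X‖₁ ≤ −log det U − n. -/
/-!
Conjugating by the square root `B` of `U` turns `X` into the positive definite matrix `B X B`,
whose eigenvalues `λᵢ` satisfy `log λᵢ ≤ λᵢ - 1`; summing gives
`log det U + log det X ≤ Tr(U X) - n`. Dual feasibility bounds `Tr(U X)` entrywise by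
`Tr(Σ X) + ρ‖X‖₁`.
-/

open Matrix
open scoped MatrixOrder

namespace Matrix

variable {n : Type*} [Fintype n]

theorem trace_mul_le_trace_mul_add_of_abs_sub_le {U S X : Matrix n n ℝ} {ρ : ℝ}
    (h : ∀ i j, |U i j - S i j| ≤ ρ) :
    (U * X).trace ≤ (S * X).trace + ρ * ∑ i, ∑ j, |X i j| := by
  have hdiff : (U * X).trace - (S * X).trace = ∑ i, ∑ j, (U i j - S i j) * X j i := by
    rw [← trace_sub, ← sub_mul]
    simp only [trace, diag, mul_apply, sub_apply]
  have hbound : ∑ i, ∑ j, (U i j - S i j) * X j i ≤ ρ * ∑ i, ∑ j, |X i j| := by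
    rw [Finset.sum_comm (f := fun i j => |X i j|), Finset.mul_sum]
    refine Finset.sum_le_sum fun i _ => ?_
    rw [Finset.mul_sum]
    refine Finset.sum_le_sum fun j _ => ?_
    calc (U i j - S i j) * X j i ≤ |U i j - S i j| * |X j i| := by
          rw [← abs_mul]; exact le_abs_self _
      _ ≤ ρ * |X j i| := mul_le_mul_of_nonneg_right (h i j) (abs_nonneg _)
  linarith

variable [DecidableEq n]

theorem PosDef.log_det_le_trace_sub_card {M : Matrix n n ℝ} (hM : M.PosDef) :
    Real.log M.det ≤ M.trace - Fintype.card n := by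
  have hpos := hM.eigenvalues_pos
  rw [hM.isHermitian.det_eq_prod_eigenvalues, hM.isHermitian.trace_eq_sum_eigenvalues]
  simp only [RCLike.ofReal_real_eq_id, id_eq]
  rw [Real.log_prod fun i _ => (hpos i).ne', Fintype.card_eq_sum_ones, Nat.cast_sum,
    Nat.cast_one, ← Finset.sum_sub_distrib]
  exact Finset.sum_le_sum fun i _ => Real.log_le_sub_one_of_pos (hpos i)

theorem PosDef.log_det_add_log_det_le_trace_mul_sub_card {U X : Matrix n n ℝ}
    (hU : U.PosDef) (hX : X.PosDef) :
    Real.log U.det + Real.log X.det ≤ (U * X).trace - Fintype.card n := by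
  set B := CFC.sqrt U
  have hBB : B * B = U := CFC.sqrt_mul_sqrt_self U hU.posSemidef.nonneg
  have hBstar : star B = B := (CFC.sqrt_nonneg U).isSelfAdjoint
  have hBunit : IsUnit B :=
    (isStrictlyPositive_iff_posDef.mpr hU).isUnit_cfcSqrt
  have hBXB : (B * X * star B).PosDef :=
    (IsUnit.posDef_star_right_conjugate_iff hBunit).mpr hX
  have hdet : (B * X * star B).det = U.det * X.det := by
    rw [hBstar, det_mul, det_mul, ← hBB, det_mul]; ring
  have htrace : (B * X * star B).trace = (U * X).trace := by
    rw [hBstar, trace_mul_cycle, hBB]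
  have key := hBXB.log_det_le_trace_sub_card
  rwa [hdet, htrace, Real.log_mul hU.det_pos.ne' hX.det_pos.ne'] at key

end Matrix

theorem covsel_weak_duality_general (n : ℕ) (S : Matrix (Fin n) (Fin n) ℝ)
    (ρ : ℝ)
    (X U : Matrix (Fin n) (Fin n) ℝ)
    (hX : X.PosDef)
    (hU : U.PosDef)
    (hfeas : ∀ i j, |U i j - S i j| ≤ ρ) :
    Real.log X.det - (S * X).trace - ρ * ∑ i, ∑ j, |X i j| ≤
      -Real.log U.det - n := by
  have hlogdet := hU.log_det_add_log_det_le_trace_mul_sub_card hX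
  have htrace := trace_mul_le_trace_mul_add_of_abs_sub_le (X := X) hfeas
  rw [Fintype.card_fin] at hlogdet
  linarith

/-- Weak duality for the penalized maximum likelihood problem: for any feasible
primal point `X` and dual point `U`, the primal objective is at most the dual one. -/
theorem covsel_weak_duality (n : ℕ) (S : Matrix (Fin n) (Fin n) ℝ) (hS : S.IsSymm)
    (ρ : ℝ) (hρ : 0 < ρ)
    (X U : Matrix (Fin n) (Fin n) ℝ)
    (hXs : X.IsSymm) (hX : X.PosDef)
    (hUs : U.IsSymm) (hU : U.PosDef)
    (hfeas : ∀ i j, |U i j - S i j| ≤ ρ) :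
    Real.log X.det - (S * X).trace - ρ * ∑ i, ∑ j, |X i j| ≤
      -Real.log U.det - n :=
  covsel_weak_duality_general n S ρ X U hX hU hfeas
end

section
/- If X is positive definite and U is positive definite with Tr(XU) = n and log det X − Tr(ΣX) − ρ‖X‖₁ = −log det U − n (i.e., the primal and dual objectives coincide), and U satisfies the dual constraints |U_{ij} − Σ_{ij}| ≤ ρ, then U = X⁻¹. -/
open Matrix Finset

/-!
Write `X = Bᴴ B`. Then `M = B U Bᴴ` is positive definite with `Tr M = Tr (X U)` and
`det M = det X · det U`, and for its eigenvalues `λᵢ > 0` we have `∑ (λᵢ - 1 - log λᵢ) ≥ 0`,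
with equality only if every `λᵢ = 1`. Hence `log det X + log det U ≤ Tr (X U) - n`, with
equality only if `M = 1`, i.e. `U = X⁻¹`. Dual feasibility bounds `Tr (X U) - Tr (S X)` by
`ρ ‖X‖₁`, so equality of the two objectives forces that equality case.
-/

namespace Matrix

variable {ι : Type*} [Fintype ι]

lemma trace_mul_le_of_forall_abs_le {R : Type*} [CommRing R] [LinearOrder R] [IsOrderedRing R]
    (X D : Matrix ι ι R) {ρ : R} (hD : ∀ i j, |D i j| ≤ ρ) :
    (X * D).trace ≤ ρ * ∑ i, ∑ j, |X i j| := by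
  simp only [trace, diag, mul_apply, mul_sum]
  refine sum_le_sum fun i _ => sum_le_sum fun j _ => ?_
  calc X i j * D j i ≤ |X i j * D j i| := le_abs_self _
    _ = |X i j| * |D j i| := abs_mul _ _
    _ ≤ |X i j| * ρ := mul_le_mul_of_nonneg_left (hD j i) (abs_nonneg _)
    _ = ρ * |X i j| := mul_comm _ _

variable [DecidableEq ι]

lemma PosDef.eq_one_of_trace_sub_card_le_log_det {M : Matrix ι ι ℝ} (hM : M.PosDef)
    (h : M.trace - Fintype.card ι ≤ Real.log M.det) : M = 1 := by
  set μ := hM.1.eigenvalues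
  have hμ : ∀ i, 0 < μ i := hM.eigenvalues_pos
  have hμ_one : ∀ i, μ i = 1 := by
    by_contra! ⟨i, hi⟩
    have hlt : ∑ j, Real.log (μ j) < ∑ j, (μ j - 1) :=
      sum_lt_sum (fun j _ => Real.log_le_sub_one_of_pos (hμ j))
        ⟨i, mem_univ i, Real.log_lt_sub_one_of_pos (hμ i) hi⟩
    rw [hM.1.trace_eq_sum_eigenvalues, hM.1.det_eq_prod_eigenvalues] at h
    simp only [RCLike.ofReal_real_eq_id, id] at h
    rw [Real.log_prod fun j _ => (hμ j).ne'] at h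
    simp only [sum_sub_distrib, sum_const, card_univ, nsmul_eq_mul, mul_one] at hlt
    linarith
  refine CFC.eq_one_of_spectrum_subset_one (R := ℝ) M ?_ hM.1
  rw [hM.1.spectrum_real_eq_range_eigenvalues]
  rintro _ ⟨i, rfl⟩
  exact hμ_one i

open scoped MatrixOrder in
lemma PosDef.eq_inv_of_trace_mul_sub_card_le_log_det_add {X U : Matrix ι ι ℝ}
    (hX : X.PosDef) (hU : U.PosDef)
    (h : (X * U).trace - Fintype.card ι ≤ Real.log X.det + Real.log U.det) : U = X⁻¹ := by
  obtain ⟨B, rfl⟩ := CStarAlgebra.nonneg_iff_eq_star_mul_self.mp hX.posSemidef.nonneg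
  set M := B * U * Bᴴ
  have hM_det : M.det = (star B * B).det * U.det := by
    simp only [M, det_mul, star_eq_conjTranspose, det_conjTranspose, star_trivial]; ring
  have hM_trace : M.trace = (star B * B * U).trace := by
    rw [trace_mul_cycle, star_eq_conjTranspose]
  have hM : M.PosDef := by
    refine (hU.posSemidef.mul_mul_conjTranspose_same B).posDef_iff_det_ne_zero.mpr ?_
    rw [hM_det]; exact (mul_pos hX.det_pos hU.det_pos).ne'
  have hM_one : M = 1 := hM.eq_one_of_trace_sub_card_le_log_det <| by
    rwa [hM_det, Real.log_mul hX.det_pos.ne' hU.det_pos.ne', hM_trace]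
  refine (inv_eq_right_inv ?_).symm
  rw [star_eq_conjTranspose, Matrix.mul_assoc, mul_eq_one_comm]
  exact hM_one

end Matrix

theorem covsel_optimality_complementarity_general (n : ℕ) (S : Matrix (Fin n) (Fin n) ℝ) (ρ : ℝ)
    (X U : Matrix (Fin n) (Fin n) ℝ) (hX : X.PosDef) (hU : U.PosDef)
    (hfeas : ∀ i j, |U i j - S i j| ≤ ρ)
    (heq : Real.log X.det - (S * X).trace - ρ * ∑ i, ∑ j, |X i j| =
      -Real.log U.det - n) :
    U = X⁻¹ := by
  have hdual := trace_mul_le_of_forall_abs_le X (U - S) fun i j => by simpa using hfeas i j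
  rw [Matrix.mul_sub, trace_sub, trace_mul_comm X S] at hdual
  refine hX.eq_inv_of_trace_mul_sub_card_le_log_det_add hU ?_
  rw [Fintype.card_fin]
  linarith

/-- If primal and dual objectives coincide at feasible points with `Tr(XU) = n`,
then `U = X⁻¹`. -/
theorem covsel_optimality_complementarity (n : ℕ) (S : Matrix (Fin n) (Fin n) ℝ)
    (hS : S.IsSymm) (ρ : ℝ) (hρ : 0 < ρ)
    (X U : Matrix (Fin n) (Fin n) ℝ)
    (hXs : X.IsSymm) (hX : X.PosDef)
    (hUs : U.IsSymm) (hU : U.PosDef)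
    (hfeas : ∀ i j, |U i j - S i j| ≤ ρ)
    (htr : (X * U).trace = (n : ℝ))
    (heq : Real.log X.det - (S * X).trace - ρ * ∑ i, ∑ j, |X i j| =
      -Real.log U.det - n) :
    U = X⁻¹ :=
  covsel_optimality_complementarity_general n S ρ X U hX hU hfeas heq
end

section
/- For positive definite matrices A, B ∈ S_n, log det A + log det B ≤ Tr(AB) − n, with equality if and only if B = A⁻¹. -/
/-!
Factor `A = Tᴴ T` with `T` invertible and put `C = T B Tᴴ`. Then `C` is positive definite,
`det C = det A · det B` and `tr C = tr (A B)`. If `λᵢ` are the eigenvalues of `C`, then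
`tr C - n - log det C = ∑ᵢ (λᵢ - 1 - log λᵢ) ≥ 0` by `log x ≤ x - 1`, with equality iff every
`λᵢ = 1`, i.e. `C = 1`, i.e. `B = (Tᴴ T)⁻¹ = A⁻¹`.
-/

open Matrix

theorem Real.sub_one_sub_log_eq_zero_iff {x : ℝ} (hx : 0 < x) :
    x - 1 - Real.log x = 0 ↔ x = 1 := by
  refine ⟨fun h => ?_, by rintro rfl; simp⟩
  by_contra hx1
  linarith [Real.log_lt_sub_one_of_pos hx hx1]

namespace Matrix

variable {ι : Type*} [Fintype ι] [DecidableEq ι]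

theorem IsHermitian.eigenvalues_eq_one_iff {𝕜 : Type*} [RCLike 𝕜] {A : Matrix ι ι 𝕜}
    (hA : A.IsHermitian) : hA.eigenvalues = 1 ↔ A = 1 := by
  refine ⟨fun h => ?_, fun h => ?_⟩
  · rw [hA.spectral_theorem, h]
    simp
  · subst h
    ext i
    rw [hA.eigenvalues_eq i, one_mulVec, dotProduct_comm,
      ← EuclideanSpace.inner_eq_star_dotProduct]
    simp [hA.eigenvectorBasis.orthonormal.1 i]

theorem mul_mul_eq_one_iff_eq_inv {R : Type*} [CommRing R] {U M V : Matrix ι ι R}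
    (h : IsUnit (V * U)) : U * M * V = 1 ↔ M = (V * U)⁻¹ := by
  rw [_root_.mul_eq_one_comm, ← mul_assoc]
  exact ⟨fun h' => (inv_eq_right_inv h').symm,
    fun h' => h' ▸ mul_nonsing_inv _ ((isUnit_iff_isUnit_det _).1 h)⟩

open scoped ComplexOrder MatrixOrder in
theorem PosDef.exists_isUnit_conjTranspose_mul_self_eq {𝕜 : Type*} [RCLike 𝕜]
    {A : Matrix ι ι 𝕜} (hA : A.PosDef) : ∃ T : Matrix ι ι 𝕜, IsUnit T ∧ Tᴴ * T = A := by
  have hS := hA.isStrictlyPositive.sqrt.posDef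
  exact ⟨CFC.sqrt A, hS.isUnit, by rw [hS.1.eq, CFC.sqrt_mul_sqrt_self A hA.posSemidef.nonneg]⟩

namespace PosDef

variable {C : Matrix ι ι ℝ}

theorem trace_sub_card_sub_log_det (hC : C.PosDef) :
    C.trace - Fintype.card ι - Real.log C.det =
      ∑ i, (hC.1.eigenvalues i - 1 - Real.log (hC.1.eigenvalues i)) := by
  simp only [hC.1.trace_eq_sum_eigenvalues, hC.1.det_eq_prod_eigenvalues,
    RCLike.ofReal_real_eq_id, id, Real.log_prod fun i _ => (hC.eigenvalues_pos i).ne',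
    Finset.sum_sub_distrib, Finset.sum_const, Finset.card_univ, nsmul_eq_mul, mul_one]

theorem sub_one_sub_log_eigenvalues_nonneg (hC : C.PosDef) (i : ι) :
    0 ≤ hC.1.eigenvalues i - 1 - Real.log (hC.1.eigenvalues i) :=
  sub_nonneg.2 (Real.log_le_sub_one_of_pos (hC.eigenvalues_pos i))

theorem log_det_le_trace_sub_card_s3 (hC : C.PosDef) :
    Real.log C.det ≤ C.trace - Fintype.card ι := by
  have := hC.trace_sub_card_sub_log_det ▸
    Finset.sum_nonneg fun i _ => hC.sub_one_sub_log_eigenvalues_nonneg i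
  linarith

theorem log_det_eq_trace_sub_card_iff (hC : C.PosDef) :
    Real.log C.det = C.trace - Fintype.card ι ↔ C = 1 := by
  rw [← hC.1.eigenvalues_eq_one_iff, eq_comm, ← sub_eq_zero, hC.trace_sub_card_sub_log_det,
    Finset.sum_eq_zero_iff_of_nonneg fun i _ => hC.sub_one_sub_log_eigenvalues_nonneg i,
    funext_iff]
  simp only [Finset.mem_univ, true_implies, Pi.one_apply,
    Real.sub_one_sub_log_eq_zero_iff (hC.eigenvalues_pos _)]

end PosDef

end Matrix

theorem logdet_sum_le_trace_sub_n_general (n : ℕ)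
    (A B : Matrix (Fin n) (Fin n) ℝ)
    (hA : A.PosDef)
    (hB : B.PosDef) :
    Real.log A.det + Real.log B.det ≤ (A * B).trace - n ∧
      (Real.log A.det + Real.log B.det = (A * B).trace - n ↔ B = A⁻¹) := by
  obtain ⟨T, hT, rfl⟩ := hA.exists_isUnit_conjTranspose_mul_self_eq
  have hC : (T * B * Tᴴ).PosDef := hB.mul_mul_conjTranspose_same (vecMul_injective_of_isUnit hT)
  have hdet : (T * B * Tᴴ).det = (Tᴴ * T).det * B.det := by
    simp only [det_mul]
    ring
  have htrace : (T * B * Tᴴ).trace = (Tᴴ * T * B).trace := trace_mul_cycle ..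
  simpa only [hdet, Real.log_mul hA.det_pos.ne' hB.det_pos.ne', htrace, Fintype.card_fin,
    mul_mul_eq_one_iff_eq_inv hA.isUnit] using
    And.intro hC.log_det_le_trace_sub_card_s3 hC.log_det_eq_trace_sub_card_iff

/-- For positive definite `A, B`, `log det A + log det B ≤ Tr(AB) − n`, with
equality if and only if `B = A⁻¹`. -/
theorem logdet_sum_le_trace_sub_n (n : ℕ)
    (A B : Matrix (Fin n) (Fin n) ℝ)
    (hAs : A.IsSymm) (hA : A.PosDef)
    (hBs : B.IsSymm) (hB : B.PosDef) :
    Real.log A.det + Real.log B.det ≤ (A * B).trace - n ∧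
      (Real.log A.det + Real.log B.det = (A * B).trace - n ↔ B = A⁻¹) :=
  logdet_sum_le_trace_sub_n_general n A B hA hB
end
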